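/- Let 1 < λ < 2 be a real number, β_0 < β_1 real numbers, and c_0, c_1 ∈ ℂ. If φ : ℝ → ℂ is a continuous, compactly supported, not identically zero solution of φ(x) = c_0 φ(λx − β_0) + c_1 φ(λx − β_1) (a.e.), and φ is Hölder continuous with exponent μ > 0, then μ ≤ 1/log₂λ − 1, i.e., (μ + 1)·ln λ ≤ ln 2. -/

import Mathlib

/-!
At the left end `a` of the support of `φ` only the first term of the equation survives near `a`,
and `a` is the fixed point of `x ↦ λx - β₀`. Hence `φ (a + t / λⁿ) = c₀ⁿ φ (a + t)`, which the
Hölder bound at the zero `a` of `φ` allows only if `‖c₀‖ λ^μ ≤ 1`; reflecting `x ↦ -x` gives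
`‖c₁‖ λ^μ ≤ 1` at the right end. Integrating `‖φ‖` against the equation gives
`λ ≤ ‖c₀‖ + ‖c₁‖`, so `λ^(μ+1) ≤ 2`.
-/

open MeasureTheory Set

section Support

variable {E : Type*} [Zero E] {φ : ℝ → E} {a c : ℝ}

theorem mem_lowerBounds_tsupport_of_forall_lt (h : ∀ x < c, φ x = 0) :
    c ∈ lowerBounds (tsupport φ) := fun _ hx =>
  closure_minimal (fun x hx => not_lt.1 fun hlt => Function.mem_support.1 hx (h x hlt))
    isClosed_Ici hx

theorem IsGreatest.isLeast_tsupport_comp_neg (hb : IsGreatest (tsupport φ) c) :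
    IsLeast (tsupport fun x => φ (-x)) (-c) := by
  rw [show (fun x => φ (-x)) = φ ∘ Homeomorph.neg ℝ from rfl, tsupport_comp_eq_preimage]
  exact ⟨by simpa using hb.1, fun x hx => neg_le.2 (hb.2 hx)⟩

theorem IsLeast.apply_eq_zero_of_le [TopologicalSpace E] [T2Space E]
    (ha : IsLeast (tsupport φ) a) (hcont : Continuous φ) {x : ℝ} (hx : x ≤ a) : φ x = 0 := by
  have hIio : EqOn φ 0 (Iio a) := fun y hy =>
    image_eq_zero_of_notMem_tsupport fun hy' => (ha.2 hy').not_gt hy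
  exact hIio.closure hcont continuous_const (by rwa [closure_Iio])

theorem IsLeast.exists_apply_add_ne_zero [TopologicalSpace E] [T2Space E]
    (ha : IsLeast (tsupport φ) a) (hcont : Continuous φ) {δ : ℝ} (hδ : 0 < δ) :
    ∃ t ∈ Ioo 0 δ, φ (a + t) ≠ 0 := by
  obtain ⟨y, hy, hya⟩ := Metric.mem_closure_iff.1 ha.1 δ hδ
  have hay : a < y := not_le.1 fun h => hy (ha.apply_eq_zero_of_le hcont h)
  rw [Real.dist_eq, abs_sub_comm, abs_of_pos (sub_pos.2 hay)] at hya
  exact ⟨y - a, ⟨sub_pos.2 hay, hya⟩, by simpa using hy⟩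

end Support

theorem norm_mul_rpow_le_one_of_eq_mul_comp_mul {𝕜 : Type*} [NormedField 𝕜] {F : ℝ → 𝕜}
    {c : 𝕜} {lam μ M t₀ t₁ : ℝ} (hlam : 1 < lam) (hF : ∀ t ∈ Ioc 0 t₀, F t = c * F (lam * t))
    (hHol : ∀ t > 0, ‖F t‖ ≤ M * t ^ μ) (ht₁ : t₁ ∈ Ioc 0 t₀) (hFt₁ : F t₁ ≠ 0) :
    ‖c‖ * lam ^ μ ≤ 1 := by
  have hlam0 : 0 < lam := by linarith
  have hiter (n : ℕ) : F (t₁ / lam ^ n) = c ^ n * F t₁ := by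
    induction n with
    | zero => simp
    | succ n ih =>
      have hmem : t₁ / lam ^ (n + 1) ∈ Ioc 0 t₀ :=
        ⟨by have := ht₁.1; positivity, (div_le_self ht₁.1.le (one_le_pow₀ hlam.le)).trans ht₁.2⟩
      rw [hF _ hmem, show lam * (t₁ / lam ^ (n + 1)) = t₁ / lam ^ n by field_simp; ring, ih]
      ring
  by_contra! h
  obtain ⟨n, hn⟩ := pow_unbounded_of_one_lt (M * t₁ ^ μ / ‖F t₁‖) h
  have hbound := hHol _ (div_pos ht₁.1 (pow_pos hlam0 n))
  rw [hiter, norm_mul, norm_pow, Real.div_rpow ht₁.1.le (pow_pos hlam0 n).le,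
    ← Real.rpow_pow_comm hlam0.le, mul_div_assoc',
    le_div_iff₀ (pow_pos (Real.rpow_pos_of_pos hlam0 μ) n)] at hbound
  rw [div_lt_iff₀ (norm_pos_iff.2 hFt₁), mul_pow] at hn
  linarith

def IsTwoScaleSolution {𝕜 : Type*} [Mul 𝕜] [Add 𝕜] (lam β₀ β₁ : ℝ) (c₀ c₁ : 𝕜) (φ : ℝ → 𝕜) :
    Prop :=
  ∀ x, φ x = c₀ * φ (lam * x - β₀) + c₁ * φ (lam * x - β₁)

namespace IsTwoScaleSolution

variable {𝕜 : Type*} [NormedField 𝕜] {lam β₀ β₁ a μ M : ℝ} {c₀ c₁ : 𝕜} {φ : ℝ → 𝕜}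

theorem of_ae (hcont : Continuous φ)
    (heq : ∀ᵐ x, φ x = c₀ * φ (lam * x - β₀) + c₁ * φ (lam * x - β₁)) :
    IsTwoScaleSolution lam β₀ β₁ c₀ c₁ φ :=
  congrFun <| (Continuous.ae_eq_iff_eq volume hcont (by fun_prop)).1 heq

theorem comp_neg (hφ : IsTwoScaleSolution lam β₀ β₁ c₀ c₁ φ) :
    IsTwoScaleSolution lam (-β₁) (-β₀) c₁ c₀ fun x => φ (-x) := fun x => by
  show φ (-x) = _
  rw [hφ (-x), add_comm]
  ring_nf

theorem le_sub_one_mul_of_isLeast (hφ : IsTwoScaleSolution lam β₀ β₁ c₀ c₁ φ)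
    (hcont : Continuous φ) (hlam : 0 < lam) (hβ : β₀ ≤ β₁) (ha : IsLeast (tsupport φ) a) :
    β₀ ≤ (lam - 1) * a := by
  have hlow : (a + β₀) / lam ∈ lowerBounds (tsupport φ) := by
    refine mem_lowerBounds_tsupport_of_forall_lt fun x hx => ?_
    rw [lt_div_iff₀ hlam] at hx
    rw [hφ x, ha.apply_eq_zero_of_le hcont (by linarith),
      ha.apply_eq_zero_of_le hcont (by linarith), mul_zero, mul_zero, add_zero]
  have := hlow ha.1
  rw [div_le_iff₀ hlam] at this
  linarith

theorem mul_sub_eq_of_isLeast (hφ : IsTwoScaleSolution lam β₀ β₁ c₀ c₁ φ)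
    (hcont : Continuous φ) (hlam : 0 < lam) (hβ : β₀ ≤ β₁) (hc₀ : c₀ ≠ 0)
    (ha : IsLeast (tsupport φ) a) (ha₁ : (lam - 1) * a ≤ β₁) : lam * a - β₀ = a := by
  have hlow : lam * a - β₀ ∈ lowerBounds (tsupport φ) := by
    refine mem_lowerBounds_tsupport_of_forall_lt fun y hy => ?_
    have hx : (y + β₀) / lam ≤ a := by rw [div_le_iff₀ hlam]; linarith
    have h := hφ ((y + β₀) / lam)
    rw [mul_div_cancel₀ _ hlam.ne', add_sub_cancel_right, ha.apply_eq_zero_of_le hcont hx,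
      ha.apply_eq_zero_of_le hcont (x := y + β₀ - β₁) (by linarith), mul_zero, add_zero] at h
    exact (mul_eq_zero.1 h.symm).resolve_left hc₀
  linarith [hlow ha.1, hφ.le_sub_one_mul_of_isLeast hcont hlam hβ ha]

theorem norm_mul_rpow_le_one_of_isLeast (hφ : IsTwoScaleSolution lam β₀ β₁ c₀ c₁ φ)
    (hcont : Continuous φ) (hlam : 1 < lam) (hβ : β₀ < β₁) (ha : IsLeast (tsupport φ) a)
    (ha₁ : (lam - 1) * a ≤ β₁) (hHol : ∀ x y, ‖φ x - φ y‖ ≤ M * |x - y| ^ μ) :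
    ‖c₀‖ * lam ^ μ ≤ 1 := by
  rcases eq_or_ne c₀ 0 with rfl | hc₀
  · simp
  have hlam0 : 0 < lam := by linarith
  have hfix := hφ.mul_sub_eq_of_isLeast hcont hlam0 hβ.le hc₀ ha ha₁
  obtain ⟨t₁, ht₁, hφt₁⟩ := ha.exists_apply_add_ne_zero hcont (div_pos (sub_pos.2 hβ) hlam0)
  refine norm_mul_rpow_le_one_of_eq_mul_comp_mul (F := fun t => φ (a + t)) (M := M) hlam
    (fun t ht => ?_) (fun t ht => ?_) ⟨ht₁.1, ht₁.2.le⟩ hφt₁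
  · have ht' := (le_div_iff₀ hlam0).1 ht.2
    rw [hφ (a + t), ha.apply_eq_zero_of_le hcont (x := lam * (a + t) - β₁) (by linarith),
      mul_zero, add_zero]
    congr 2
    linarith
  · simpa [ha.apply_eq_zero_of_le hcont le_rfl, abs_of_pos ht] using hHol (a + t) a

theorem le_norm_add_norm (hφ : IsTwoScaleSolution lam β₀ β₁ c₀ c₁ φ) (hcont : Continuous φ)
    (hsupp : HasCompactSupport φ) (hne : φ ≠ 0) (hlam : 0 < lam) : lam ≤ ‖c₀‖ + ‖c₁‖ := by
  set I := ∫ x, ‖φ x‖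
  have hint : Integrable fun x => ‖φ x‖ := hcont.norm.integrable_of_hasCompactSupport hsupp.norm
  have hscale (β : ℝ) : Integrable (fun x => ‖φ (lam * x - β)‖) ∧
      ∫ x, ‖φ (lam * x - β)‖ = lam⁻¹ * I := by
    refine ⟨(hint.comp_sub_right β).comp_mul_left' hlam.ne', ?_⟩
    rw [Measure.integral_comp_mul_left (fun y => ‖φ (y - β)‖),
      integral_sub_right_eq_self (fun y => ‖φ y‖), abs_of_pos (inv_pos.2 hlam), smul_eq_mul]
  obtain ⟨x₀, hx₀⟩ := Function.ne_iff.1 hne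
  have hI : 0 < I := hcont.norm.integral_pos_of_hasCompactSupport_nonneg_nonzero hsupp.norm
    (fun _ => norm_nonneg _) (norm_ne_zero_iff.2 hx₀)
  have hle : I ≤ (‖c₀‖ + ‖c₁‖) * (lam⁻¹ * I) := calc
    I ≤ ∫ x, (‖c₀‖ * ‖φ (lam * x - β₀)‖ + ‖c₁‖ * ‖φ (lam * x - β₁)‖) := by
      refine integral_mono hint (((hscale β₀).1.const_mul _).add ((hscale β₁).1.const_mul _))
        fun x => ?_
      rw [hφ x, ← norm_mul, ← norm_mul]
      exact norm_add_le _ _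
    _ = (‖c₀‖ + ‖c₁‖) * (lam⁻¹ * I) := by
      rw [integral_add ((hscale β₀).1.const_mul _) ((hscale β₁).1.const_mul _),
        integral_const_mul, integral_const_mul, (hscale β₀).2, (hscale β₁).2, add_mul]
  rw [← mul_assoc, le_mul_iff_one_le_left hI, ← div_eq_mul_inv, one_le_div hlam] at hle
  exact hle

end IsTwoScaleSolution

theorem two_term_two_scale_holder_bound_general (lam : ℝ) (hlam₁ : 1 < lam)
    (β₀ β₁ : ℝ) (hβ : β₀ < β₁) (c₀ c₁ : ℂ)
    (φ : ℝ → ℂ) (hcont : Continuous φ) (hsupp : HasCompactSupport φ)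
    (hne : φ ≠ 0)
    (heq : ∀ᵐ x : ℝ, φ x = c₀ * φ (lam * x - β₀) + c₁ * φ (lam * x - β₁))
    (μ : ℝ)
    (hHolder : ∃ M > (0 : ℝ), ∀ x y : ℝ, ‖φ x - φ y‖ ≤ M * |x - y| ^ μ) :
    (μ + 1) * Real.log lam ≤ Real.log 2 := by
  obtain ⟨M, -, hHol⟩ := hHolder
  have hlam0 : 0 < lam := by linarith
  have hφ : IsTwoScaleSolution lam β₀ β₁ c₀ c₁ φ := .of_ae hcont heq
  have hK : (tsupport φ).Nonempty :=
    (Function.support_nonempty_iff.2 hne).mono (subset_tsupport φ)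
  obtain ⟨a, ha⟩ := hsupp.isCompact.exists_isLeast hK
  obtain ⟨b, hb⟩ := hsupp.isCompact.exists_isGreatest hK
  have hb' := hb.isLeast_tsupport_comp_neg
  have hab : a ≤ b := hb.2 ha.1
  have ha₀ := hφ.le_sub_one_mul_of_isLeast hcont hlam0 hβ.le ha
  have hb₁ := hφ.comp_neg.le_sub_one_mul_of_isLeast (hcont.comp continuous_neg) hlam0
    (neg_le_neg hβ.le) hb'
  have hc₀ := hφ.norm_mul_rpow_le_one_of_isLeast hcont hlam₁ hβ ha (by nlinarith) hHol
  have hc₁ := hφ.comp_neg.norm_mul_rpow_le_one_of_isLeast (hcont.comp continuous_neg) hlam₁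
    (neg_lt_neg hβ) hb' (by nlinarith) fun x y => by
      simpa only [neg_sub_neg, abs_sub_comm] using hHol (-x) (-y)
  have hsum := hφ.le_norm_add_norm hcont hsupp hne hlam0
  have hpow := Real.rpow_pos_of_pos hlam0 μ
  calc (μ + 1) * Real.log lam = Real.log (lam * lam ^ μ) := by
        rw [Real.log_mul hlam0.ne' hpow.ne', Real.log_rpow hlam0]; ring
    _ ≤ Real.log 2 := Real.log_le_log (by positivity) (by nlinarith)

/-- If `1 < λ < 2` and `φ` is a continuous, compactly supported, not identically zero
solution of the two-term two-scale difference equation which is Hölder continuous with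
exponent `μ > 0`, then `μ ≤ 1/log₂ λ - 1`, i.e. `(μ + 1) * ln λ ≤ ln 2`. -/
theorem two_term_two_scale_holder_bound (lam : ℝ) (hlam₁ : 1 < lam) (hlam₂ : lam < 2)
    (β₀ β₁ : ℝ) (hβ : β₀ < β₁) (c₀ c₁ : ℂ)
    (φ : ℝ → ℂ) (hcont : Continuous φ) (hsupp : HasCompactSupport φ)
    (hne : φ ≠ 0)
    (heq : ∀ᵐ x : ℝ, φ x = c₀ * φ (lam * x - β₀) + c₁ * φ (lam * x - β₁))
    (μ : ℝ) (hμ : 0 < μ)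
    (hHolder : ∃ M > (0 : ℝ), ∀ x y : ℝ, ‖φ x - φ y‖ ≤ M * |x - y| ^ μ) :
    (μ + 1) * Real.log lam ≤ Real.log 2 :=
  two_term_two_scale_holder_bound_general lam hlam₁ β₀ β₁ hβ c₀ c₁ φ hcont hsupp hne heq μ hHolder
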